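/- arXiv:2203.16238 — 3 statements merged into one kernel-verified Lean document; each statement's English description precedes it below -/
import Mathlib

section
/- If a real sequence φ = (φ_k)_{0≤k≤2t} has a positive definite Hankel moment matrix M_t(φ) = (φ_{i+j})_{0≤i,j≤t}, then there exists a Borel measure ν on ℝ such that ∫ x^k dν = φ_k for all 0 ≤ k ≤ 2t (a truncated Hamburger moment sequence with positive definite Hankel matrix has a representing measure on the real line). -/
open MeasureTheory Matrix

noncomputable section

/-- The (Hankel) moment matrix `M_t(φ)` of a sequence `φ = (φ_k)`, with entries `φ_{i+j}`. -/
def hankel (t : ℕ) (φ : ℕ → ℝ) : Matrix (Fin (t + 1)) (Fin (t + 1)) ℝ :=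
  fun i j => φ ((i : ℕ) + (j : ℕ))

/-!
If `φ` were not in the convex cone `K ⊆ ℝ^{2t+1}` spanned by the moment vectors
`(1, x, …, x^{2t})`, then, `K` having nonempty interior, Hahn–Banach gives a nonzero functional
`f` with `f ≤ 0` on `K` and `f φ ≥ 0`. The polynomial `-f(1, x, …, x^{2t})` is nonnegative of
degree `≤ 2t`, hence a sum of squares of polynomials of degree `≤ t`. The Riesz functional
`L_φ(∑ pₖ Xᵏ) = ∑ pₖ φₖ` satisfies `L_φ(r²) = cᵀ M_t(φ) c` for the coefficient vector `c` of `r`,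
so it is strictly positive on such nonzero sums of squares; but it takes the value `-f φ ≤ 0`
there, forcing `f = 0`. Hence `φ = ∑ cᵢ (1, xᵢ, …, xᵢ^{2t})` with `cᵢ ≥ 0`, the moment vector of
the atomic measure `∑ cᵢ δ_{xᵢ}`.
-/

open Polynomial Topology

def sumSqDegLE (d : ℕ) : AddSubmonoid ℝ[X] :=
  AddSubmonoid.closure ((· ^ 2) '' {r : ℝ[X] | r.natDegree ≤ d})

namespace sumSqDegLE

theorem sq_mem {d : ℕ} {r : ℝ[X]} (hr : r.natDegree ≤ d) : r ^ 2 ∈ sumSqDegLE d :=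
  AddSubmonoid.subset_closure ⟨r, hr, rfl⟩

theorem C_mem {c : ℝ} (hc : 0 ≤ c) (d : ℕ) : C c ∈ sumSqDegLE d := by
  have hsq : C c = C (√c) ^ 2 := by rw [← C_pow, Real.sq_sqrt hc]
  exact hsq ▸ sq_mem (by simp)

theorem X_sub_C_sq_mul_mem {d : ℕ} {p : ℝ[X]} (a : ℝ) (hp : p ∈ sumSqDegLE d) :
    (X - C a) ^ 2 * p ∈ sumSqDegLE (d + 1) := by
  induction hp using AddSubmonoid.closure_induction with
  | mem _ hq =>
    obtain ⟨r, hr, rfl⟩ := hq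
    rw [← mul_pow]
    refine sq_mem (natDegree_mul_le.trans ?_)
    rw [natDegree_X_sub_C, add_comm]
    exact Nat.add_le_add_right hr 1
  | zero => simp
  | add _ _ _ _ hp hq => rw [mul_add]; exact add_mem hp hq

end sumSqDegLE

theorem Polynomial.X_sub_C_sq_dvd_sub_C_eval_of_forall_eval_le {p : ℝ[X]} {a : ℝ}
    (hmin : ∀ y, p.eval a ≤ p.eval y) : (X - C a) ^ 2 ∣ p - C (p.eval a) := by
  rcases eq_or_ne (p - C (p.eval a)) 0 with h0 | h0
  · simp [h0]
  have hderiv : p.derivative.eval a = 0 := by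
    rw [← Polynomial.deriv]
    exact IsLocalMin.deriv_eq_zero (Filter.Eventually.of_forall hmin)
  rw [← le_rootMultiplicity_iff h0, Nat.succ_le_iff, one_lt_rootMultiplicity_iff_isRoot h0]
  simp [hderiv]

theorem Continuous.nonneg_of_forall_ne {X : Type*} [TopologicalSpace X] {a : X} [(𝓝[≠] a).NeBot]
    {f : X → ℝ} (hf : Continuous f) (h : ∀ y ≠ a, 0 ≤ f y) (y : X) : 0 ≤ f y := by
  have hclosure : closure {a}ᶜ ⊆ {y | 0 ≤ f y} :=
    (isClosed_le continuous_const hf).closure_subset_iff.mpr h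
  exact hclosure ((dense_compl_singleton a).closure_eq ▸ Set.mem_univ y)

theorem Polynomial.mem_sumSqDegLE_of_eval_nonneg (d : ℕ) {p : ℝ[X]} (hdeg : p.natDegree ≤ 2 * d)
    (hp : ∀ x, 0 ≤ p.eval x) : p ∈ sumSqDegLE d := by
  induction d generalizing p with
  | zero =>
    rw [eq_C_of_natDegree_le_zero hdeg]
    exact sumSqDegLE.C_mem (by simpa [coeff_zero_eq_eval_zero] using hp 0) 0
  | succ d ih =>
    -- Subtracting the minimum value `m` leaves a double root at the minimiser `a`.
    obtain ⟨a, ha⟩ := p.exists_forall_norm_le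
    have hmin : ∀ y, p.eval a ≤ p.eval y := fun y => by
      simpa [abs_of_nonneg (hp _)] using ha y
    set m := p.eval a
    obtain ⟨q, hq⟩ := X_sub_C_sq_dvd_sub_C_eval_of_forall_eval_le hmin
    have hq_nonneg : ∀ y ≠ a, 0 ≤ q.eval y := fun y hy => by
      have hpy : 0 ≤ ((X - C a) ^ 2 * q).eval y := by
        rw [← hq, eval_sub, eval_C, sub_nonneg]; exact hmin y
      rw [eval_mul, eval_pow, eval_sub, eval_X, eval_C] at hpy
      exact nonneg_of_mul_nonneg_right hpy (sq_pos_of_ne_zero (sub_ne_zero.mpr hy))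
    have hq_deg : q.natDegree ≤ 2 * d := by
      rcases eq_or_ne q 0 with rfl | hq0
      · simp
      have := congrArg natDegree hq
      rw [natDegree_sub_C, (monic_X_sub_C a).pow 2 |>.natDegree_mul' hq0, natDegree_pow,
        natDegree_X_sub_C] at this
      omega
    have hpq : p = (X - C a) ^ 2 * q + C m := by rw [← hq, sub_add_cancel]
    rw [hpq]
    exact add_mem (sumSqDegLE.X_sub_C_sq_mul_mem a
      (ih hq_deg (q.continuous.nonneg_of_forall_ne hq_nonneg))) (sumSqDegLE.C_mem (hp a) _)

def rieszFunctional (φ : ℕ → ℝ) : ℝ[X] →ₗ[ℝ] ℝ :=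
  lsum fun k => φ k • LinearMap.id

theorem rieszFunctional_monomial (φ : ℕ → ℝ) (n : ℕ) (a : ℝ) :
    rieszFunctional φ (monomial n a) = a * φ n := by
  simp [rieszFunctional, lsum_apply, sum_monomial_index, mul_comm]

theorem rieszFunctional_sq {t : ℕ} (φ : ℕ → ℝ) {r : ℝ[X]} (hr : r.natDegree ≤ t) :
    rieszFunctional φ (r ^ 2) =
      (fun i : Fin (t + 1) => r.coeff i) ⬝ᵥ hankel t φ *ᵥ fun i => r.coeff i := by
  have hr' : r = ∑ i : Fin (t + 1), monomial i (r.coeff i) := by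
    rw [Fin.sum_univ_eq_sum_range (fun i => monomial i (r.coeff i))]
    exact r.as_sum_range' _ (Nat.lt_succ_of_le hr)
  conv_lhs => rw [sq, hr', Finset.sum_mul_sum]
  simp only [map_sum, monomial_mul_monomial, rieszFunctional_monomial, dotProduct, mulVec,
    hankel, Finset.mul_sum]
  refine Finset.sum_congr rfl fun i _ => Finset.sum_congr rfl fun j _ => by ring

theorem rieszFunctional_sq_pos {t : ℕ} {φ : ℕ → ℝ} (h : (hankel t φ).PosDef) {r : ℝ[X]}
    (hr0 : r ≠ 0) (hr : r.natDegree ≤ t) : 0 < rieszFunctional φ (r ^ 2) := by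
  have hc : (fun i : Fin (t + 1) => r.coeff i) ≠ 0 := fun hc => by
    simpa [hr0] using congrFun hc ⟨r.natDegree, Nat.lt_succ_of_le hr⟩
  simpa [rieszFunctional_sq φ hr] using h.dotProduct_mulVec_pos hc

theorem eq_zero_of_rieszFunctional_nonpos {t : ℕ} {φ : ℕ → ℝ} (h : (hankel t φ).PosDef)
    {p : ℝ[X]} (hp : p ∈ sumSqDegLE t) (hLp : rieszFunctional φ p ≤ 0) : p = 0 := by
  suffices 0 ≤ rieszFunctional φ p ∧ (rieszFunctional φ p = 0 → p = 0) from
    this.2 (hLp.antisymm this.1)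
  clear hLp
  induction hp using AddSubmonoid.closure_induction with
  | mem _ hq =>
    obtain ⟨r, hr, rfl⟩ := hq
    rcases eq_or_ne r 0 with rfl | hr0
    · simp
    have := rieszFunctional_sq_pos h hr0 hr
    exact ⟨this.le, fun h0 => absurd h0 this.ne'⟩
  | zero => simp
  | add _ _ _ _ hp hq =>
    rw [map_add]
    refine ⟨add_nonneg hp.1 hq.1, fun h0 => ?_⟩
    rw [hp.2 (by linarith [hp.1, hq.1]), hq.2 (by linarith [hp.1, hq.1]), add_zero]

def momentVector (n : ℕ) (x : ℝ) : Fin n → ℝ := fun k => x ^ (k : ℕ)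

def dualPolynomial {n : ℕ} (f : (Fin n → ℝ) →ₗ[ℝ] ℝ) : ℝ[X] :=
  ∑ k : Fin n, C (f (Pi.single k 1)) * X ^ (k : ℕ)

section DualPolynomial

variable {n : ℕ} (f : (Fin n → ℝ) →ₗ[ℝ] ℝ)

theorem LinearMap.apply_eq_sum_mul_apply_single (y : Fin n → ℝ) :
    f y = ∑ k, y k * f (Pi.single k 1) := by
  conv_lhs => rw [← Finset.univ_sum_single y]
  refine (map_sum f _ _).trans (Finset.sum_congr rfl fun k _ => ?_)
  rw [← smul_eq_mul, ← map_smul, ← Pi.single_smul', smul_eq_mul, mul_one]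

theorem coeff_dualPolynomial (k : Fin n) : (dualPolynomial f).coeff k = f (Pi.single k 1) := by
  simp [dualPolynomial, finsetSum_coeff, Fin.val_inj]

theorem natDegree_dualPolynomial_le : (dualPolynomial f).natDegree ≤ n - 1 :=
  natDegree_sum_le_of_forall_le _ _ fun k _ =>
    (natDegree_C_mul_X_pow_le _ _).trans (Nat.le_sub_one_of_lt k.isLt)

theorem eval_dualPolynomial (x : ℝ) : (dualPolynomial f).eval x = f (momentVector n x) := by
  rw [f.apply_eq_sum_mul_apply_single]
  simp only [dualPolynomial, eval_finsetSum, eval_mul, eval_C, eval_pow, eval_X, momentVector]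
  exact Finset.sum_congr rfl fun _ _ => mul_comm _ _

theorem rieszFunctional_dualPolynomial (φ : ℕ → ℝ) :
    rieszFunctional φ (dualPolynomial f) = f fun k => φ k := by
  rw [f.apply_eq_sum_mul_apply_single]
  simp only [dualPolynomial, C_mul_X_pow_eq_monomial, map_sum, rieszFunctional_monomial]
  exact Finset.sum_congr rfl fun _ _ => mul_comm _ _

theorem eq_zero_of_dualPolynomial_eq_zero (hf : dualPolynomial f = 0) : f = 0 :=
  LinearMap.pi_ext' fun k => LinearMap.ext_ring <| by
    simpa [coeff_dualPolynomial] using congrArg (coeff · k) hf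

end DualPolynomial

theorem span_range_momentVector (n : ℕ) :
    Submodule.span ℝ (Set.range (momentVector n)) = ⊤ := by
  by_contra hne
  obtain ⟨f, hf0, hker⟩ := Submodule.exists_le_ker_of_lt_top _ (lt_top_iff_ne_top.mpr hne)
  refine hf0 (eq_zero_of_dualPolynomial_eq_zero f (Polynomial.funext fun x => ?_))
  rw [eval_dualPolynomial, eval_zero]
  exact hker (Submodule.subset_span ⟨x, rfl⟩)

def momentCone (n : ℕ) : PointedCone ℝ (Fin n → ℝ) :=
  PointedCone.hull ℝ (Set.range (momentVector n))

theorem interior_momentCone_nonempty (n : ℕ) :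
    (interior (momentCone n : Set (Fin n → ℝ))).Nonempty := by
  have h0 : (0 : Fin n → ℝ) ∈ (momentCone n : Set (Fin n → ℝ)) := zero_mem _
  rw [(momentCone n).convex.interior_nonempty_iff_affineSpan_eq_top,
    AffineSubspace.affineSpan_eq_top_iff_vectorSpan_eq_top_of_nonempty ℝ _ _ ⟨0, h0⟩,
    vectorSpan_eq_span_vsub_set_right ℝ h0, eq_top_iff, ← span_range_momentVector]
  simp only [vsub_eq_sub, sub_zero, Set.image_id']
  exact Submodule.span_mono PointedCone.subset_hull

theorem PointedCone.apply_nonpos_of_forall_apply_le {E : Type*} [AddCommGroup E] [Module ℝ E]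
    (K : PointedCone ℝ E) (f : E →ₗ[ℝ] ℝ) {b : ℝ} (hf : ∀ y ∈ K, f y ≤ b) {y : E} (hy : y ∈ K) :
    f y ≤ 0 := by
  by_contra! hpos
  have := hf (((|b| + 1) / f y) • y) (K.smul_mem (by positivity) hy)
  rw [map_smul, smul_eq_mul, div_mul_cancel₀ _ hpos.ne'] at this
  linarith [le_abs_self b]

theorem mem_momentCone_of_posDef {t : ℕ} {φ : ℕ → ℝ} (h : (hankel t φ).PosDef) :
    (fun k : Fin (2 * t + 1) => φ k) ∈ momentCone (2 * t + 1) := by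
  by_contra hφ
  obtain ⟨f, hf0, hf⟩ := geometric_hahn_banach_of_nonempty_interior_point (momentCone _).convex
    (fun hint => hφ (interior_subset hint)) (interior_momentCone_nonempty _)
  set Q := -dualPolynomial (f : (Fin (2 * t + 1) → ℝ) →ₗ[ℝ] ℝ)
  have hQ_nonneg : ∀ x, 0 ≤ Q.eval x := fun x => by
    rw [eval_neg, eval_dualPolynomial, neg_nonneg]
    exact (momentCone _).apply_nonpos_of_forall_apply_le _ hf (PointedCone.subset_hull ⟨x, rfl⟩)
  have hQ : Q ∈ sumSqDegLE t := mem_sumSqDegLE_of_eval_nonneg t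
    (by simpa [Q] using natDegree_dualPolynomial_le (f : (Fin (2 * t + 1) → ℝ) →ₗ[ℝ] ℝ)) hQ_nonneg
  have hLQ : rieszFunctional φ Q ≤ 0 := by
    rw [map_neg, rieszFunctional_dualPolynomial, neg_nonpos]
    simpa using hf 0 (zero_mem _)
  have hfQ := eq_zero_of_rieszFunctional_nonpos h hQ hLQ
  rw [neg_eq_zero] at hfQ
  exact hf0 (ContinuousLinearMap.coe_injective (eq_zero_of_dualPolynomial_eq_zero _ hfQ))

theorem exists_measure_of_mem_momentCone {n : ℕ} {y : Fin n → ℝ} (hy : y ∈ momentCone n) :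
    ∃ ν : Measure ℝ, ∀ k : Fin n,
      Integrable (fun x : ℝ => x ^ (k : ℕ)) ν ∧ ∫ x, x ^ (k : ℕ) ∂ν = y k := by
  obtain ⟨c, rfl⟩ := Finsupp.mem_span_range_iff_exists_finsupp.mp hy
  have hint (k : ℕ) : ∀ x ∈ c.support,
      Integrable (fun x : ℝ => x ^ k) (ENNReal.ofReal (c x) • Measure.dirac x) :=
    fun _ _ => (integrable_dirac (by simp)).smul_measure ENNReal.ofReal_ne_top
  refine ⟨∑ x ∈ c.support, ENNReal.ofReal (c x) • Measure.dirac x,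
    fun k => ⟨integrable_finsetSum_measure.mpr (hint k), ?_⟩⟩
  rw [integral_finsetSum_measure (hint k)]
  simp [integral_smul_measure, integral_dirac, Finsupp.sum, momentVector, (c _).2,
    ← Nonneg.coe_smul]

/-- A truncated Hamburger moment sequence `(φ_k)_{k ≤ 2t}` whose Hankel moment matrix
`M_t(φ) = (φ_{i+j})_{0 ≤ i,j ≤ t}` is positive definite has a representing Borel measure
on the real line: there is a Borel measure `ν` on `ℝ` with `∫ x^k dν = φ_k` for all
`0 ≤ k ≤ 2t`. -/
theorem stmt2 (t : ℕ) (φ : ℕ → ℝ) (h : (hankel t φ).PosDef) :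
    ∃ ν : Measure ℝ, ∀ k ≤ 2 * t,
      Integrable (fun x : ℝ => x ^ k) ν ∧ ∫ x, x ^ k ∂ν = φ k := by
  obtain ⟨ν, hν⟩ := exists_measure_of_mem_momentCone (mem_momentCone_of_posDef h)
  exact ⟨ν, fun k hk => hν ⟨k, by omega⟩⟩
end
end

section
/- Let μ be a Borel measure on a compact set X×Y ⊂ ℝⁿ×ℝᵖ with marginal φ on X, and assume M_t(μ) is positive definite for all t. Let (P_{α,β})_{(α,β)∈ℕ^{n+p}_t} ⊂ ℝ[x,y]_t be a family of polynomials orthonormal with respect to μ, forming a basis of ℝ[x,y]_t, and such that the polynomials P_{α,0}, α ∈ ℕⁿ_t, involve only the variables x and are orthonormal with respect to φ. Then for all (x,y) ∈ ℝⁿ×ℝᵖ: Λ^μ_t(x,y)^{-1} = Λ^φ_t(x)^{-1} + Σ_{(α,β)∈ℕ^{n+p}_t, |β|≥1} P_{α,β}(x,y)². -/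
open MeasureTheory Matrix

noncomputable section

/-- Multi-indices `α ∈ ℕⁿ` with `|α| ≤ t`, encoded with entries in `Fin (t+1)`. -/
def MIdx (n t : ℕ) : Type :=
  {α : Fin n → Fin (t + 1) // (∑ i, ((α i : ℕ))) ≤ t}

instance (n t : ℕ) : Fintype (MIdx n t) := by unfold MIdx; infer_instance

instance (n t : ℕ) : DecidableEq (MIdx n t) := by unfold MIdx; infer_instance

/-- The monomial `x^α`. -/
def mon {n t : ℕ} (x : Fin n → ℝ) (α : MIdx n t) : ℝ :=
  ∏ i, x i ^ ((α.1 i : ℕ))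

/-- Joint multi-indices `(α, β) ∈ ℕⁿ × ℕᵖ` with `|α| + |β| ≤ t`. -/
def JIdx (n p t : ℕ) : Type :=
  {ab : (Fin n → Fin (t + 1)) × (Fin p → Fin (t + 1)) //
    (∑ i, ((ab.1 i : ℕ))) + (∑ j, ((ab.2 j : ℕ))) ≤ t}

instance (n p t : ℕ) : Fintype (JIdx n p t) := by unfold JIdx; infer_instance

instance (n p t : ℕ) : DecidableEq (JIdx n p t) := by unfold JIdx; infer_instance

/-- The monomial `x^α y^β`. -/
def mon2 {n p t : ℕ} (x : Fin n → ℝ) (y : Fin p → ℝ) (γ : JIdx n p t) : ℝ :=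
  (∏ i, x i ^ ((γ.1.1 i : ℕ))) * ∏ j, y j ^ ((γ.1.2 j : ℕ))

/-- Evaluation at `(x,y)` of the polynomial in `ℝ[x,y]_t` with coefficient vector `c`. -/
def eval2 {n p t : ℕ} (c : JIdx n p t → ℝ) (x : Fin n → ℝ) (y : Fin p → ℝ) : ℝ :=
  ∑ γ, c γ * mon2 x y γ

/-- The moment matrix `M_t(μ)` of a measure `μ` on `ℝⁿ × ℝᵖ`. -/
def momMat2 (n p t : ℕ) (μ : Measure ((Fin n → ℝ) × (Fin p → ℝ))) :
    Matrix (JIdx n p t) (JIdx n p t) ℝ :=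
  fun γ δ => ∫ z, mon2 z.1 z.2 γ * mon2 z.1 z.2 δ ∂μ

/-- The moment matrix `M_t(φ)` of a measure `φ` on `ℝⁿ`. -/
def momMatX (n t : ℕ) (φ : Measure (Fin n → ℝ)) : Matrix (MIdx n t) (MIdx n t) ℝ :=
  fun α β => ∫ x, mon x α * mon x β ∂φ

/-! If the rows of `A` are the coefficients, in the monomial basis, of polynomials orthonormal
for a measure with moment matrix `M`, then `A M Aᵀ = 1`; hence `M⁻¹ = Aᵀ A` and
`v_t(z)ᵀ M⁻¹ v_t(z) = ‖A v_t(z)‖²` is the sum of the squares of these polynomials at `z`.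
For `μ` the sum runs over all `P_{α,β}`; the `P_{α,0}` are `φ`-orthonormal polynomials in the
monomials of `x` alone, so their part of the sum is `Λ^φ_t(x)⁻¹`. -/

namespace Matrix

variable {ι R : Type*} [Fintype ι] [DecidableEq ι] [CommRing R]

theorem inv_eq_transpose_mul_of_mul_mul_transpose_eq_one {M A : Matrix ι ι R}
    (h : A * M * Aᵀ = 1) : M⁻¹ = Aᵀ * A := by
  refine inv_eq_right_inv ?_
  rw [← Matrix.mul_assoc]
  exact mul_eq_one_comm.mp (by rwa [← Matrix.mul_assoc])

theorem dotProduct_inv_mulVec_eq_sum_sq {M A : Matrix ι ι R} (h : A * M * Aᵀ = 1)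
    (v : ι → R) : v ⬝ᵥ M⁻¹ *ᵥ v = ∑ i, (A *ᵥ v) i ^ 2 := by
  rw [inv_eq_transpose_mul_of_mul_mul_transpose_eq_one h, ← mulVec_mulVec, dotProduct_mulVec,
    vecMul_transpose]
  simp only [dotProduct, sq]

end Matrix

theorem Continuous.integrable_of_measure_compl_eq_zero {E : Type*} [TopologicalSpace E]
    [MeasurableSpace E] [OpensMeasurableSpace E] {ν : Measure E} [IsFiniteMeasure ν]
    {K : Set E} (hK : IsCompact K) (hνK : ν Kᶜ = 0) {f : E → ℝ} (hf : Continuous f) :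
    Integrable f ν := by
  obtain ⟨C, hC⟩ := hK.exists_bound_of_continuousOn hf.continuousOn
  refine (integrable_const C).mono' hf.aestronglyMeasurable ?_
  filter_upwards [measure_eq_zero_iff_ae_notMem.mp hνK] with z hz
  exact hC z (by simpa using hz)

section MomentMatrix

variable {E ι : Type*} [MeasurableSpace E] [Fintype ι]

def momentMatrix (ν : Measure E) (w : E → ι → ℝ) : Matrix ι ι ℝ :=
  Matrix.of fun i j => ∫ e, w e i * w e j ∂ν

theorem integral_mulVec_mul_mulVec {κ : Type*} (ν : Measure E) {w : E → ι → ℝ}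
    (hw : ∀ i j, Integrable (fun e => w e i * w e j) ν) (A : Matrix κ ι ℝ) (γ δ : κ) :
    ∫ e, (A *ᵥ w e) γ * (A *ᵥ w e) δ ∂ν = (A * momentMatrix ν w * Aᵀ) γ δ := by
  have hexpand : ∀ e, (A *ᵥ w e) γ * (A *ᵥ w e) δ
      = ∑ i, ∑ j, A γ i * A δ j * (w e i * w e j) := fun e => by
    simp only [Matrix.mulVec, dotProduct, Finset.sum_mul_sum]
    exact Finset.sum_congr rfl fun i _ => Finset.sum_congr rfl fun j _ => by ring
  simp_rw [hexpand]
  rw [integral_finsetSum _ fun i _ => integrable_finsetSum _ fun j _ => (hw i j).const_mul _]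
  simp_rw [integral_finsetSum _ fun j _ => (hw _ j).const_mul _, integral_const_mul,
    Matrix.mul_apply, Matrix.transpose_apply, momentMatrix, Matrix.of_apply, Finset.sum_mul]
  rw [Finset.sum_comm]
  exact Finset.sum_congr rfl fun i _ => Finset.sum_congr rfl fun j _ => by ring

theorem dotProduct_momentMatrix_inv_mulVec_eq_sum_sq [DecidableEq ι] (ν : Measure E)
    {w : E → ι → ℝ} (hw : ∀ i j, Integrable (fun e => w e i * w e j) ν) (A : Matrix ι ι ℝ)
    (horth : ∀ γ δ, ∫ e, (A *ᵥ w e) γ * (A *ᵥ w e) δ ∂ν = if γ = δ then 1 else 0)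
    (v : ι → ℝ) : v ⬝ᵥ (momentMatrix ν w)⁻¹ *ᵥ v = ∑ γ, (A *ᵥ v) γ ^ 2 := by
  refine Matrix.dotProduct_inv_mulVec_eq_sum_sq ?_ v
  ext γ δ
  rw [← integral_mulVec_mul_mulVec ν hw, horth, Matrix.one_apply]

end MomentMatrix

theorem momMat2_eq_momentMatrix (n p t : ℕ) (μ : Measure ((Fin n → ℝ) × (Fin p → ℝ))) :
    momMat2 n p t μ = momentMatrix μ fun z => mon2 z.1 z.2 :=
  rfl

theorem momMatX_eq_momentMatrix (n t : ℕ) (φ : Measure (Fin n → ℝ)) :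
    momMatX n t φ = momentMatrix φ mon :=
  rfl

theorem continuous_mon {n t : ℕ} (α : MIdx n t) : Continuous fun x : Fin n → ℝ => mon x α := by
  unfold mon
  fun_prop

theorem continuous_mon2 {n p t : ℕ} (γ : JIdx n p t) :
    Continuous fun z : (Fin n → ℝ) × (Fin p → ℝ) => mon2 z.1 z.2 γ := by
  unfold mon2
  fun_prop

def MIdx.toJIdx {n p t : ℕ} (α : MIdx n t) : JIdx n p t := ⟨(α.1, 0), by simpa using α.2⟩

theorem MIdx.toJIdx_injective {n p t : ℕ} :
    Function.Injective (MIdx.toJIdx : MIdx n t → JIdx n p t) :=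
  fun _ _ h => Subtype.ext (congrArg (fun γ : JIdx n p t => γ.1.1) h)

theorem JIdx.filter_snd_eq_zero_eq_image_toJIdx (n p t : ℕ) :
    Finset.univ.filter (fun γ : JIdx n p t => γ.1.2 = 0) = Finset.univ.image MIdx.toJIdx := by
  ext γ
  simp only [Finset.mem_filter, Finset.mem_univ, true_and, Finset.mem_image]
  constructor
  · intro hγ
    exact ⟨⟨γ.1.1, le_trans (Nat.le_add_right _ _) γ.2⟩, Subtype.ext (Prod.ext rfl hγ.symm)⟩
  · rintro ⟨α, rfl⟩
    rfl

theorem JIdx.one_le_sum_snd_iff {n p t : ℕ} (γ : JIdx n p t) :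
    1 ≤ ∑ j, (γ.1.2 j : ℕ) ↔ γ.1.2 ≠ 0 := by
  rw [Nat.one_le_iff_ne_zero, Ne, Ne, Finset.sum_eq_zero_iff, funext_iff]
  simp only [Finset.mem_univ, true_implies, Fin.val_eq_zero_iff, Pi.zero_apply]

theorem mon2_toJIdx {n p t : ℕ} (x : Fin n → ℝ) (y : Fin p → ℝ) (α : MIdx n t) :
    mon2 x y α.toJIdx = mon x α := by
  simp [mon2, mon, MIdx.toJIdx]

theorem eval2_eq_sum_mon_of_support {n p t : ℕ} {c : JIdx n p t → ℝ}
    (hc : ∀ δ, c δ ≠ 0 → δ.1.2 = 0) (x : Fin n → ℝ) (y : Fin p → ℝ) :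
    eval2 c x y = ∑ α : MIdx n t, c α.toJIdx * mon x α := by
  rw [eval2, ← Finset.sum_filter_of_ne fun δ _ h => hc δ (left_ne_zero_of_mul h),
    JIdx.filter_snd_eq_zero_eq_image_toJIdx, Finset.sum_image fun _ _ _ _ h =>
      MIdx.toJIdx_injective h]
  simp only [mon2_toJIdx]

theorem JIdx.sum_eq_sum_toJIdx_add_sum_one_le {n p t : ℕ} (f : JIdx n p t → ℝ) :
    ∑ γ, f γ = ∑ α : MIdx n t, f α.toJIdx
      + ∑ γ ∈ Finset.univ.filter (fun γ : JIdx n p t => 1 ≤ ∑ j, (γ.1.2 j : ℕ)), f γ := by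
  rw [← Finset.sum_filter_not_add_sum_filter Finset.univ
    (fun γ : JIdx n p t => 1 ≤ ∑ j, (γ.1.2 j : ℕ))]
  simp only [JIdx.one_le_sum_snd_iff, not_not]
  rw [JIdx.filter_snd_eq_zero_eq_image_toJIdx,
    Finset.sum_image fun _ _ _ _ h => MIdx.toJIdx_injective h]

theorem stmt5_general (n p t : ℕ) (X : Set (Fin n → ℝ)) (Y : Set (Fin p → ℝ))
    (hX : IsCompact X) (hY : IsCompact Y)
    (μ : Measure ((Fin n → ℝ) × (Fin p → ℝ))) [IsFiniteMeasure μ]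
    (hsupp : μ (X ×ˢ Y)ᶜ = 0)
    (P : JIdx n p t → (JIdx n p t → ℝ))
    (horth : ∀ γ δ : JIdx n p t,
      ∫ z, eval2 (P γ) z.1 z.2 * eval2 (P δ) z.1 z.2 ∂μ = if γ = δ then 1 else 0)
    (honlyx : ∀ γ : JIdx n p t, γ.1.2 = 0 → ∀ δ : JIdx n p t, P γ δ ≠ 0 → δ.1.2 = 0)
    (horthφ : ∀ γ δ : JIdx n p t, γ.1.2 = 0 → δ.1.2 = 0 →
      ∫ x, eval2 (P γ) x 0 * eval2 (P δ) x 0 ∂(μ.map Prod.fst)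
        = if γ = δ then 1 else 0) :
    ∀ (x : Fin n → ℝ) (y : Fin p → ℝ),
      mon2 x y ⬝ᵥ (momMat2 n p t μ)⁻¹.mulVec (mon2 x y)
        = mon x ⬝ᵥ (momMatX n t (μ.map Prod.fst))⁻¹.mulVec (mon x)
          + ∑ γ ∈ Finset.univ.filter
              (fun γ : JIdx n p t => 1 ≤ ∑ j, ((γ.1.2 j : ℕ))),
              (eval2 (P γ) x y) ^ 2 := by
  intro x y
  have hφX : μ.map Prod.fst Xᶜ = 0 := by
    rw [Measure.map_apply measurable_fst hX.isClosed.measurableSet.compl]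
    refine measure_mono_null (fun z hz => ?_) hsupp
    exact fun hzXY => hz hzXY.1
  let B : Matrix (MIdx n t) (MIdx n t) ℝ := Matrix.of fun α β => P α.toJIdx β.toJIdx
  have hB : ∀ α x' y', (B *ᵥ mon x') α = eval2 (P α.toJIdx) x' y' := fun α x' y' =>
    (eval2_eq_sum_mon_of_support (honlyx _ rfl) x' y').symm
  have hμ := dotProduct_momentMatrix_inv_mulVec_eq_sum_sq μ (w := fun z => mon2 z.1 z.2)
    (fun γ δ => ((continuous_mon2 γ).mul (continuous_mon2 δ)).integrable_of_measure_compl_eq_zero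
      (hX.prod hY) hsupp) (Matrix.of P) horth (mon2 x y)
  have hφ := dotProduct_momentMatrix_inv_mulVec_eq_sum_sq (μ.map Prod.fst) (w := mon)
    (fun α β => ((continuous_mon α).mul (continuous_mon β)).integrable_of_measure_compl_eq_zero
      hX hφX) B (fun α β => by
        simp only [hB _ _ 0, horthφ α.toJIdx β.toJIdx rfl rfl, MIdx.toJIdx_injective.eq_iff])
    (mon x)
  rw [momMat2_eq_momentMatrix, momMatX_eq_momentMatrix, hμ, hφ]
  simp only [hB _ _ y]
  exact JIdx.sum_eq_sum_toJIdx_add_sum_one_le fun γ => eval2 (P γ) x y ^ 2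

/-- Let `μ` be a Borel measure on a compact set `X × Y ⊆ ℝⁿ × ℝᵖ` with positive definite
moment matrices, `φ` its marginal on `X`, and `(P_{α,β})` a family of polynomials in
`ℝ[x,y]_t` orthonormal with respect to `μ`, forming a basis of `ℝ[x,y]_t`, such that the
`P_{α,0}` involve only the variables `x` and are orthonormal with respect to `φ`.
Then for all `(x,y)`:
`Λ^μ_t(x,y)⁻¹ = Λ^φ_t(x)⁻¹ + Σ_{|β| ≥ 1} P_{α,β}(x,y)²`. -/
theorem stmt5 (n p t : ℕ) (X : Set (Fin n → ℝ)) (Y : Set (Fin p → ℝ))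
    (hX : IsCompact X) (hY : IsCompact Y)
    (μ : Measure ((Fin n → ℝ) × (Fin p → ℝ))) [IsFiniteMeasure μ]
    (hsupp : μ (X ×ˢ Y)ᶜ = 0)
    (hPD : ∀ s : ℕ, (momMat2 n p s μ).PosDef)
    (P : JIdx n p t → (JIdx n p t → ℝ))
    (horth : ∀ γ δ : JIdx n p t,
      ∫ z, eval2 (P γ) z.1 z.2 * eval2 (P δ) z.1 z.2 ∂μ = if γ = δ then 1 else 0)
    (hindep : LinearIndependent ℝ P)
    (hspan : Submodule.span ℝ (Set.range P) = ⊤)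
    (honlyx : ∀ γ : JIdx n p t, γ.1.2 = 0 → ∀ δ : JIdx n p t, P γ δ ≠ 0 → δ.1.2 = 0)
    (horthφ : ∀ γ δ : JIdx n p t, γ.1.2 = 0 → δ.1.2 = 0 →
      ∫ x, eval2 (P γ) x 0 * eval2 (P δ) x 0 ∂(μ.map Prod.fst)
        = if γ = δ then 1 else 0) :
    ∀ (x : Fin n → ℝ) (y : Fin p → ℝ),
      mon2 x y ⬝ᵥ (momMat2 n p t μ)⁻¹.mulVec (mon2 x y)
        = mon x ⬝ᵥ (momMatX n t (μ.map Prod.fst))⁻¹.mulVec (mon x)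
          + ∑ γ ∈ Finset.univ.filter
              (fun γ : JIdx n p t => 1 ≤ ∑ j, ((γ.1.2 j : ℕ))),
              (eval2 (P γ) x y) ^ 2 :=
  stmt5_general n p t X Y hX hY μ hsupp P horth honlyx horthφ
end
end

section
/- Let μ be a Borel measure on a compact set X×Y ⊂ ℝⁿ×ℝᵖ (p ≥ 1) with nonempty interior (so that M_t(μ) is positive definite for all t), and let φ be the marginal of μ on ℝⁿ. Then for every x ∈ ℝⁿ and every t ∈ ℕ there exists a real sequence ν_{x,t} = ((ν_{x,t})_β)_{β∈ℕᵖ_{2t}} with positive definite moment matrix M_t(ν_{x,t}) (a linear functional on ℝ[y]_{2t}, not necessarily having a representing measure) such that Λ^μ_t(x,y) = Λ^φ_t(x) · Λ^{ν_{x,t}}_t(y) for all y ∈ ℝᵖ. -/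
/-!
Write `v_t(x, y) = E_x v_t(y)`, where `E_x = sliceMat x` substitutes the fixed `x`. Then
`Λ^μ_t(x, ·)⁻¹` is the quadratic form of `E_xᵀ M_t(μ)⁻¹ E_x` in `v_t(y)`, and after dividing by
`Λ^φ_t(x)⁻¹` it remains to show that every positive definite `B` is, as a quadratic form in
`v_t(y)`, the inverse of a positive definite Hankel matrix `M_t(ν)`.

For this, minimise `⟨B, N⟩ - log det N` over positive definite Hankel matrices `N`. The moment
matrix of the `y`-marginal of `μ` is admissible and `log det N ≤ ⟨B, N⟩ / 2 + K`, so the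
sublevel sets are compact and a minimiser exists. Its first-order condition
`⟨N⁻¹, H⟩ = ⟨B, H⟩` for all Hankel `H`, applied to the Hankel matrix `H = v_t(y) v_t(y)ᵀ`, is the
required identity.
-/

open MeasureTheory Matrix

noncomputable section

/-- The moment matrix `M_t(φ)` of a sequence `φ = (φ_α)`, with entries `φ_{α+β}`. -/
def momMat (n t : ℕ) (φ : (Fin n → ℕ) → ℝ) : Matrix (MIdx n t) (MIdx n t) ℝ :=
  fun α β => φ (fun i => (α.1 i : ℕ) + (β.1 i : ℕ))

/-- The Christoffel function `Λ^φ_t` of a sequence `φ`. -/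
def CFseq (n t : ℕ) (φ : (Fin n → ℕ) → ℝ) (x : Fin n → ℝ) : ℝ :=
  (mon x ⬝ᵥ (momMat n t φ)⁻¹.mulVec (mon x))⁻¹

/-- The Christoffel function `Λ^μ_t(x,y)` of a measure `μ` on `ℝⁿ × ℝᵖ`. -/
def CF2 (n p t : ℕ) (μ : Measure ((Fin n → ℝ) × (Fin p → ℝ)))
    (x : Fin n → ℝ) (y : Fin p → ℝ) : ℝ :=
  (mon2 x y ⬝ᵥ (momMat2 n p t μ)⁻¹.mulVec (mon2 x y))⁻¹

/-- The Christoffel function `Λ^φ_t(x)` of a measure `φ` on `ℝⁿ`. -/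
def CFX (n t : ℕ) (φ : Measure (Fin n → ℝ)) (x : Fin n → ℝ) : ℝ :=
  (mon x ⬝ᵥ (momMatX n t φ)⁻¹.mulVec (mon x))⁻¹

open Filter Topology

namespace Matrix

variable {I : Type*} [Fintype I]

lemma dotProduct_conjTranspose_mul_mul_mulVec {J : Type*} [Fintype J] (E : Matrix J I ℝ)
    (A : Matrix J J ℝ) (v : I → ℝ) : v ⬝ᵥ (Eᴴ * A * E) *ᵥ v = E *ᵥ v ⬝ᵥ A *ᵥ (E *ᵥ v) := by
  rw [← mulVec_mulVec, ← mulVec_mulVec, dotProduct_mulVec, vecMul_conjTranspose, star_trivial,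
    star_trivial]

lemma PosSemidef.trace_mul_nonneg {A N : Matrix I I ℝ} (hA : A.PosSemidef) (hN : N.PosSemidef) :
    0 ≤ (A * N).trace := by
  obtain ⟨k, v, rfl⟩ := posSemidef_iff_eq_sum_vecMulVec.1 hN
  simp only [Matrix.mul_sum, trace_sum, mul_vecMulVec, trace_vecMulVec, star_trivial]
  exact Finset.sum_nonneg fun i _ => by
    simpa [dotProduct_comm] using hA.dotProduct_mulVec_nonneg (v i)

lemma PosSemidef.abs_apply_le_trace {N : Matrix I I ℝ} (hN : N.PosSemidef) (i j : I) :
    |N i j| ≤ N.trace := by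
  obtain ⟨k, v, rfl⟩ := posSemidef_iff_eq_sum_vecMulVec.1 hN
  simp only [sum_apply, trace_sum, vecMulVec_apply, trace_vecMulVec, star_trivial]
  refine (Finset.abs_sum_le_sum_abs _ _).trans (Finset.sum_le_sum fun l _ => ?_)
  have hsq : ∀ a, v l a * v l a ≤ v l ⬝ᵥ v l := fun a =>
    Finset.single_le_sum (f := fun b => v l b * v l b) (fun b _ => mul_self_nonneg _)
      (Finset.mem_univ a)
  rw [abs_mul]
  nlinarith [hsq i, hsq j, abs_mul_abs_self (v l i), abs_mul_abs_self (v l j),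
    sq_nonneg (|v l i| - |v l j|)]

lemma PosSemidef.det_le_exp_trace_sub_card [DecidableEq I] {N : Matrix I I ℝ}
    (hN : N.PosSemidef) : N.det ≤ Real.exp (N.trace - Fintype.card I) := by
  rw [hN.isHermitian.det_eq_prod_eigenvalues, hN.isHermitian.trace_eq_sum_eigenvalues,
    ← Finset.card_univ, ← nsmul_one, ← Finset.sum_const, ← Finset.sum_sub_distrib, Real.exp_sum]
  refine Finset.prod_le_prod (fun i _ => hN.eigenvalues_nonneg i) fun i _ => ?_
  simpa using Real.add_one_le_exp (hN.isHermitian.eigenvalues i - 1)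

lemma isClosed_setOf_posSemidef : IsClosed {N : Matrix I I ℝ | N.PosSemidef} := by
  simp only [posSemidef_iff_dotProduct_mulVec, Set.ofPred_and, Set.ofPred_forall]
  exact (isClosed_eq continuous_id.matrix_conjTranspose continuous_id).inter <|
    isClosed_iInter fun v => isClosed_le continuous_const <|
      continuous_const.dotProduct (continuous_id.matrix_mulVec continuous_const)

open scoped MatrixOrder in
lemma PosDef.exists_pos_forall_mul_trace_le [DecidableEq I] {B : Matrix I I ℝ}
    (hB : B.PosDef) :
    ∃ m : ℝ, 0 < m ∧ ∀ N : Matrix I I ℝ, N.PosSemidef → m * N.trace ≤ (B * N).trace := by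
  suffices ∃ m : ℝ, 0 < m ∧ (B - m • (1 : Matrix I I ℝ)).PosSemidef by
    obtain ⟨m, hm, hBm⟩ := this
    refine ⟨m, hm, fun N hN => ?_⟩
    have := hBm.trace_mul_nonneg hN
    rw [Matrix.sub_mul, trace_sub, smul_mul, Matrix.one_mul, trace_smul, smul_eq_mul] at this
    linarith
  rcases isEmpty_or_nonempty I with hI | hI
  · exact ⟨1, one_pos, by simpa [Subsingleton.elim (B - _) 0] using PosSemidef.zero⟩
  obtain ⟨m, hm, hle⟩ := (CFC.exists_pos_algebraMap_le_iff hB.isHermitian.isSelfAdjoint).2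
    ((StarOrderedRing.isStrictlyPositive_iff_spectrum_pos B).1
      (isStrictlyPositive_iff_posDef.2 hB))
  exact ⟨m, hm, Matrix.le_iff.1 (by simpa [Algebra.algebraMap_eq_smul_one] using hle)⟩

lemma PosDef.exists_log_det_le_half_trace_mul [DecidableEq I] {B : Matrix I I ℝ}
    (hB : B.PosDef) :
    ∃ K : ℝ, ∀ N : Matrix I I ℝ, N.PosDef → Real.log N.det ≤ (B * N).trace / 2 + K := by
  obtain ⟨m, hm, hBm⟩ := hB.exists_pos_forall_mul_trace_le
  refine ⟨-(Fintype.card I * (1 + Real.log (m / 2))), fun N hN => ?_⟩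
  have htr := hBm N hN.posSemidef
  have hdet := (hN.posSemidef.smul (by positivity : 0 ≤ m / 2)).det_le_exp_trace_sub_card
  rw [det_smul, trace_smul, smul_eq_mul] at hdet
  have hlog := Real.log_le_log (by have := hN.det_pos; positivity) hdet
  rw [Real.log_mul (by positivity) hN.det_pos.ne', Real.log_pow, Real.log_exp] at hlog
  linarith

lemma PosDef.eventually_posDef_add_smul {N H : Matrix I I ℝ} (hN : N.PosDef)
    (hH : H.IsHermitian) : ∀ᶠ s in 𝓝 (0 : ℝ), (N + s • H).PosDef := by
  have hpos : ∀ᶠ s in 𝓝 (0 : ℝ), ∀ v ∈ Metric.sphere (0 : I → ℝ) 1,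
      0 < v ⬝ᵥ (N + s • H) *ᵥ v := by
    refine (isCompact_sphere 0 1).eventually_forall_of_forall_eventually fun v hv => ?_
    have hcont : Continuous fun q : ℝ × (I → ℝ) => q.2 ⬝ᵥ (N + q.1 • H) *ᵥ q.2 := by
      fun_prop
    have hv0 : v ≠ 0 := ne_zero_of_mem_unit_sphere ⟨v, hv⟩
    refine hcont.continuousAt.eventually (lt_mem_nhds ?_)
    simpa using hN.dotProduct_mulVec_pos hv0
  filter_upwards [hpos] with s hs
  refine PosDef.of_dotProduct_mulVec_pos (hN.isHermitian.add (hH.smul (.all s))) fun v hv => ?_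
  have hnorm : 0 < ‖v‖ := norm_pos_iff.2 hv
  have hu : ‖v‖⁻¹ • v ∈ Metric.sphere (0 : I → ℝ) 1 := by
    simp [norm_smul, hnorm.ne']
  have h := hs _ hu
  simp only [mulVec_smul, dotProduct_smul, smul_dotProduct, smul_eq_mul] at h
  simpa using pos_of_mul_pos_right (pos_of_mul_pos_right h (by positivity)) (by positivity)

lemma hasDerivAt_det_one_add_smul [DecidableEq I] (M : Matrix I I ℝ) :
    HasDerivAt (fun s : ℝ => (1 + s • M).det) M.trace 0 := by
  have h := (det (1 + (Polynomial.X : Polynomial ℝ) • M.map Polynomial.C)).hasDerivAt 0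
  rw [derivative_det_one_add_X_smul] at h
  refine h.congr_of_eventuallyEq (Eventually.of_forall fun s => ?_)
  simp [eval_det, ← smul_eq_mul_diagonal]

lemma PosDef.hasDerivAt_log_det_add_smul [DecidableEq I] {N : Matrix I I ℝ} (hN : N.PosDef)
    (H : Matrix I I ℝ) :
    HasDerivAt (fun s : ℝ => Real.log (N + s • H).det) (N⁻¹ * H).trace 0 := by
  have hdet : N.det ≠ 0 := hN.det_pos.ne'
  have hfac : ∀ s : ℝ, (N + s • H).det = N.det * (1 + s • (N⁻¹ * H)).det := by
    intro s
    rw [← det_mul, Matrix.mul_add, Matrix.mul_one, Matrix.mul_smul, ← Matrix.mul_assoc,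
      mul_nonsing_inv N (Ne.isUnit hdet), Matrix.one_mul]
  simp_rw [hfac]
  convert ((hasDerivAt_det_one_add_smul (N⁻¹ * H)).const_mul N.det).log (by simpa using hdet)
    using 1
  field_simp
  simp

lemma isCompact_setOf_posSemidef_le_det_trace_mul_le [DecidableEq I]
    (W : Submodule ℝ (Matrix I I ℝ)) {B : Matrix I I ℝ} (hB : B.PosDef) (c R : ℝ) :
    IsCompact {N | N ∈ W ∧ N.PosSemidef ∧ c ≤ N.det ∧ (B * N).trace ≤ R} := by
  obtain ⟨m, hm, hBm⟩ := hB.exists_pos_forall_mul_trace_le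
  have hbox : {N | N ∈ W ∧ N.PosSemidef ∧ c ≤ N.det ∧ (B * N).trace ≤ R} ⊆
      Set.univ.pi fun _ => Set.univ.pi fun _ => Set.Icc (-(R / m)) (R / m) := by
    rintro N ⟨-, hN, -, hR⟩ i - j -
    exact abs_le.1 ((hN.abs_apply_le_trace i j).trans ((le_div_iff₀' hm).2 ((hBm N hN).trans hR)))
  refine (isCompact_univ_pi fun _ => isCompact_univ_pi fun _ => isCompact_Icc)
    |>.of_isClosed_subset ?_ hbox
  exact W.closed_of_finiteDimensional.inter <| isClosed_setOf_posSemidef.inter <|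
    (isClosed_le continuous_const continuous_id.matrix_det).inter <|
      isClosed_le (continuous_const.matrix_mul continuous_id).matrix_trace continuous_const

def traceMulSubLogDet [DecidableEq I] (B N : Matrix I I ℝ) : ℝ :=
  (B * N).trace - Real.log N.det

theorem exists_posDef_isMinOn_traceMulSubLogDet [DecidableEq I]
    (W : Submodule ℝ (Matrix I I ℝ)) {B N₀ : Matrix I I ℝ} (hB : B.PosDef) (hN₀ : N₀.PosDef)
    (hN₀W : N₀ ∈ W) :
    ∃ N ∈ W, N.PosDef ∧ IsMinOn (traceMulSubLogDet B) {N' | N' ∈ W ∧ N'.PosDef} N := by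
  obtain ⟨K, hK⟩ := hB.exists_log_det_le_half_trace_mul
  set C := traceMulSubLogDet B N₀
  set S := {N | N ∈ W ∧ N.PosSemidef ∧ Real.exp (-C) ≤ N.det ∧ (B * N).trace ≤ 2 * (C + K)}
  -- `S` is compact and contains every admissible `N` with `traceMulSubLogDet B N ≤ C`,
  -- so a minimiser on `S` is a global one.
  have hS : ∀ N ∈ W, N.PosDef → traceMulSubLogDet B N ≤ C → N ∈ S := by
    intro N hNW hN hNC
    unfold traceMulSubLogDet at hNC
    have htr := hB.posSemidef.trace_mul_nonneg hN.posSemidef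
    have hlog := hK N hN
    refine ⟨hNW, hN.posSemidef, ?_, by linarith⟩
    rw [← Real.exp_log hN.det_pos]
    exact Real.exp_le_exp.2 (by linarith)
  have hcont : ContinuousOn (traceMulSubLogDet B) S :=
    (continuous_const.matrix_mul continuous_id).matrix_trace.continuousOn.sub <|
      continuous_id.matrix_det.continuousOn.log fun N hN => ((Real.exp_pos _).trans_le hN.2.2.1).ne'
  obtain ⟨N, hNS, hmin⟩ := (isCompact_setOf_posSemidef_le_det_trace_mul_le W hB _ _).exists_isMinOn
    ⟨N₀, hS N₀ hN₀W hN₀ le_rfl⟩ hcont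
  refine ⟨N, hNS.1, hNS.2.1.posDef_iff_det_ne_zero.2 ((Real.exp_pos _).trans_le hNS.2.2.1).ne',
    fun N' ⟨hN'W, hN'⟩ => ?_⟩
  by_cases hN'C : traceMulSubLogDet B N' ≤ C
  · exact hmin (hS N' hN'W hN' hN'C)
  · exact (hmin (hS N₀ hN₀W hN₀ le_rfl)).trans (le_of_not_ge hN'C)

theorem exists_posDef_mem_forall_trace_inv_mul_eq [DecidableEq I]
    {W : Submodule ℝ (Matrix I I ℝ)} (hW : ∀ H ∈ W, H.IsHermitian) {B N₀ : Matrix I I ℝ}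
    (hB : B.PosDef) (hN₀ : N₀.PosDef) (hN₀W : N₀ ∈ W) :
    ∃ N ∈ W, N.PosDef ∧ ∀ H ∈ W, (N⁻¹ * H).trace = (B * H).trace := by
  obtain ⟨N, hNW, hN, hmin⟩ := exists_posDef_isMinOn_traceMulSubLogDet W hB hN₀ hN₀W
  refine ⟨N, hNW, hN, fun H hH => ?_⟩
  have hloc : IsLocalMin (fun s : ℝ => traceMulSubLogDet B (N + s • H)) 0 := by
    filter_upwards [hN.eventually_posDef_add_smul (hW H hH)] with s hs
    simpa using hmin ⟨W.add_mem hNW (W.smul_mem s hH), hs⟩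
  have hderiv : HasDerivAt (fun s : ℝ => traceMulSubLogDet B (N + s • H))
      ((B * H).trace - (N⁻¹ * H).trace) 0 := by
    have hfun : (fun s : ℝ => traceMulSubLogDet B (N + s • H)) =
        fun s => (B * N).trace + s * (B * H).trace - Real.log (N + s • H).det := by
      ext s
      simp [traceMulSubLogDet, Matrix.mul_add, trace_add, trace_smul]
    rw [hfun]
    simpa using (((hasDerivAt_id' (0 : ℝ)).mul_const (B * H).trace).const_add
      (B * N).trace).fun_sub (hN.hasDerivAt_log_det_add_smul H)
  linarith [hloc.hasDerivAt_eq_zero hderiv]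

end Matrix

section Moments

variable {n p t : ℕ}

lemma mon_mul_mon (y : Fin n → ℝ) (a b : MIdx n t) :
    mon y a * mon y b = ∏ i, y i ^ ((a.1 i : ℕ) + (b.1 i : ℕ)) := by
  simp only [mon, ← Finset.prod_mul_distrib, pow_add]

lemma mon_ne_zero (x : Fin n → ℝ) : (mon x : MIdx n t → ℝ) ≠ 0 :=
  Function.ne_iff.2 ⟨⟨fun _ => 0, by simp⟩, show mon x _ ≠ (0 : ℝ) by simp [mon]⟩

lemma momMat_isHermitian (φ : (Fin n → ℕ) → ℝ) : (momMat n t φ).IsHermitian := by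
  ext a b
  simp only [conjTranspose_apply, star_trivial, momMat, add_comm]

variable (n t) in
def momMatLinearMap : ((Fin n → ℕ) → ℝ) →ₗ[ℝ] Matrix (MIdx n t) (MIdx n t) ℝ where
  toFun := momMat n t
  map_add' _ _ := rfl
  map_smul' _ _ := rfl

lemma vecMulVec_mon_mon (y : Fin n → ℝ) :
    vecMulVec (mon y) (mon y) = momMat n t (fun γ => ∏ i, y i ^ γ i) := by
  ext a b
  exact mon_mul_mon y a b

theorem exists_CFseq_eq_inv_dotProduct {φ₀ : (Fin n → ℕ) → ℝ} (hφ₀ : (momMat n t φ₀).PosDef)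
    {B : Matrix (MIdx n t) (MIdx n t) ℝ} (hB : B.PosDef) :
    ∃ ν : (Fin n → ℕ) → ℝ, (momMat n t ν).PosDef ∧
      ∀ y : Fin n → ℝ, CFseq n t ν y = (mon y ⬝ᵥ B *ᵥ mon y)⁻¹ := by
  obtain ⟨_, ⟨ν, rfl⟩, hν, htrace⟩ := exists_posDef_mem_forall_trace_inv_mul_eq
    (W := LinearMap.range (momMatLinearMap n t)) (by rintro _ ⟨φ, rfl⟩; exact momMat_isHermitian φ)
    hB hφ₀ ⟨φ₀, rfl⟩
  refine ⟨ν, hν, fun y => ?_⟩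
  have h := htrace _ ⟨fun γ => ∏ i, y i ^ γ i, (vecMulVec_mon_mon y).symm⟩
  rw [mul_vecMulVec, mul_vecMulVec, trace_vecMulVec, trace_vecMulVec] at h
  rw [CFseq, dotProduct_comm, dotProduct_comm (mon y)]
  exact congr_arg (·⁻¹) h

def JIdx.ofFst (p : ℕ) (α : MIdx n t) : JIdx n p t :=
  ⟨(α.1, fun _ => 0), by simpa using α.2⟩

def JIdx.ofSnd (n : ℕ) (β : MIdx p t) : JIdx n p t :=
  ⟨(fun _ => 0, β.1), by simpa using β.2⟩

lemma JIdx.ofFst_injective : Function.Injective (JIdx.ofFst (n := n) (t := t) p) :=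
  fun _ _ h => Subtype.ext (congr_arg (fun γ : JIdx n p t => γ.1.1) h)

lemma JIdx.ofSnd_injective : Function.Injective (JIdx.ofSnd (p := p) (t := t) n) :=
  fun _ _ h => Subtype.ext (congr_arg (fun γ : JIdx n p t => γ.1.2) h)

lemma mon2_ofFst (x : Fin n → ℝ) (y : Fin p → ℝ) (α : MIdx n t) :
    mon2 x y (JIdx.ofFst p α) = mon x α := by
  simp [mon2, mon, JIdx.ofFst]

lemma mon2_ofSnd (x : Fin n → ℝ) (y : Fin p → ℝ) (β : MIdx p t) :
    mon2 x y (JIdx.ofSnd n β) = mon y β := by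
  simp [mon2, mon, JIdx.ofSnd]

lemma momMatX_map_fst (μ : Measure ((Fin n → ℝ) × (Fin p → ℝ))) :
    momMatX n t (μ.map Prod.fst) =
      (momMat2 n p t μ).submatrix (JIdx.ofFst p) (JIdx.ofFst p) := by
  ext α β
  have hcont : Continuous fun x : Fin n → ℝ => mon x α * mon x β := by unfold mon; fun_prop
  simp only [momMatX, momMat2, submatrix_apply, mon2_ofFst]
  exact integral_map measurable_fst.aemeasurable hcont.aestronglyMeasurable

lemma momMat2_submatrix_ofSnd (μ : Measure ((Fin n → ℝ) × (Fin p → ℝ))) :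
    (momMat2 n p t μ).submatrix (JIdx.ofSnd n) (JIdx.ofSnd n) =
      momMat p t (fun β => ∫ z, ∏ j, z.2 j ^ β j ∂μ) := by
  ext a b
  simp only [momMat2, momMat, submatrix_apply, mon2_ofSnd, mon_mul_mon]

def sliceMat (x : Fin n → ℝ) : Matrix (JIdx n p t) (MIdx p t) ℝ :=
  fun γ β => if γ.1.2 = β.1 then ∏ i, x i ^ ((γ.1.1 i : ℕ)) else 0

lemma sliceMat_mulVec_mon (x : Fin n → ℝ) (y : Fin p → ℝ) :
    sliceMat x *ᵥ mon y = (mon2 x y : JIdx n p t → ℝ) := by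
  ext γ
  rw [mulVec, dotProduct, Finset.sum_eq_single_of_mem
    ⟨γ.1.2, (Nat.le_add_left _ _).trans γ.2⟩ (Finset.mem_univ _)]
  · simp [sliceMat, mon, mon2]
  · intro β _ hβ
    simp [sliceMat, show γ.1.2 ≠ β.1 from fun h => hβ (Subtype.ext h.symm)]

lemma sliceMat_mulVec_ofSnd (x : Fin n → ℝ) (v : MIdx p t → ℝ) (β : MIdx p t) :
    (sliceMat x *ᵥ v) (JIdx.ofSnd n β) = v β := by
  rw [mulVec, dotProduct, Finset.sum_eq_single_of_mem β (Finset.mem_univ _)]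
  · simp [sliceMat, JIdx.ofSnd]
  · intro β' _ hβ'
    simp [sliceMat, JIdx.ofSnd, show β.1 ≠ β'.1 from fun h => hβ' (Subtype.ext h).symm]

lemma sliceMat_mulVec_injective (x : Fin n → ℝ) :
    Function.Injective (sliceMat (p := p) (t := t) x).mulVec := fun v w h => by
  ext β
  rw [← sliceMat_mulVec_ofSnd x v, h, sliceMat_mulVec_ofSnd]

end Moments

theorem stmt9_general (n p : ℕ)
    (μ : Measure ((Fin n → ℝ) × (Fin p → ℝ)))
    (hPD : ∀ s : ℕ, (momMat2 n p s μ).PosDef)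
    (x : Fin n → ℝ) (t : ℕ) :
    ∃ ν : (Fin p → ℕ) → ℝ,
      (momMat p t ν).PosDef ∧
      ∀ y : Fin p → ℝ,
        CF2 n p t μ x y = CFX n t (μ.map Prod.fst) x * CFseq p t ν y := by
  have hM := hPD t
  have hMx : (momMatX n t (μ.map Prod.fst)).PosDef :=
    momMatX_map_fst μ ▸ hM.submatrix JIdx.ofFst_injective
  have hMy := momMat2_submatrix_ofSnd μ ▸ hM.submatrix (JIdx.ofSnd_injective (t := t))
  set b := mon x ⬝ᵥ (momMatX n t (μ.map Prod.fst))⁻¹ *ᵥ mon x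
  have hb : 0 < b := by simpa using hMx.inv.dotProduct_mulVec_pos (mon_ne_zero x)
  obtain ⟨ν, hν, hCF⟩ := exists_CFseq_eq_inv_dotProduct hMy
    ((hM.inv.conjTranspose_mul_mul_same (sliceMat_mulVec_injective x)).smul (inv_pos.2 hb))
  refine ⟨ν, hν, fun y => ?_⟩
  rw [hCF, CF2, CFX, smul_mulVec, dotProduct_smul, dotProduct_conjTranspose_mul_mul_mulVec,
    sliceMat_mulVec_mon, smul_eq_mul, mul_inv, inv_inv, inv_mul_cancel_left₀ hb.ne']

/-- Multivariate conditioning: if `μ` is a Borel measure on a compact set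
`X × Y ⊆ ℝⁿ × ℝᵖ` (`p ≥ 1`) with nonempty interior (so that `M_t(μ)` is positive
definite for all `t`), and `φ` is its marginal on `ℝⁿ`, then for every `x ∈ ℝⁿ` and
`t ∈ ℕ` there is a real sequence `ν_{x,t}` on `ℕᵖ_{2t}` with positive definite moment
matrix `M_t(ν_{x,t})` (a linear functional on `ℝ[y]_{2t}`, not necessarily having a
representing measure) such that `Λ^μ_t(x,y) = Λ^φ_t(x) · Λ^{ν_{x,t}}_t(y)` for all
`y ∈ ℝᵖ`. -/
theorem stmt9 (n p : ℕ) (hp : 1 ≤ p)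
    (X : Set (Fin n → ℝ)) (Y : Set (Fin p → ℝ))
    (hcomp : IsCompact (X ×ˢ Y)) (hint : (interior (X ×ˢ Y)).Nonempty)
    (μ : Measure ((Fin n → ℝ) × (Fin p → ℝ))) [IsFiniteMeasure μ]
    (hsupp : μ (X ×ˢ Y)ᶜ = 0)
    (hPD : ∀ s : ℕ, (momMat2 n p s μ).PosDef)
    (x : Fin n → ℝ) (t : ℕ) :
    ∃ ν : (Fin p → ℕ) → ℝ,
      (momMat p t ν).PosDef ∧
      ∀ y : Fin p → ℝ,
        CF2 n p t μ x y = CFX n t (μ.map Prod.fst) x * CFseq p t ν y :=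
  stmt9_general n p μ hPD x t
end
end
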